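/- Let F be a rigid field with s(F) ≠ 2, let φ₁, φ₂ be quadratic forms over F with φ₁ ⊥ φ₂ anisotropic, and let ψ ⊆ φ₁ ⊥ φ₂ be a subform. Then there exist forms ψ₁ ⊆ φ₁ and ψ₂ ⊆ φ₂ with ψ ≅ ψ₁ ⊥ ψ₂. -/

import Mathlib

namespace PN

variable (F : Type*) [Field F]

/-- The diagonal quadratic form with diagonal entries given by a list. -/
noncomputable def qf (l : List F) : QuadraticForm F (Fin l.length → F) :=
  QuadraticMap.weightedSumSquares F l.get

/-- Isometry of diagonal quadratic forms. -/
def Isom (l l' : List F) : Prop :=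
  Nonempty (QuadraticMap.IsometryEquiv (qf F l) (qf F l'))

/-- Diagonalization of the sum of `k` hyperbolic planes. -/
def hypList (k : ℕ) : List F :=
  List.replicate k (1 : F) ++ List.replicate k (-1 : F)

/-- A (diagonalized) form is hyperbolic if it is isometric to a sum of hyperbolic planes. -/
def IsHyp (l : List F) : Prop := ∃ k : ℕ, Isom F l (hypList F k)

def negList (l : List F) : List F := l.map (fun x => -x)

/-- Witt equivalence of diagonalized quadratic forms. -/
def WittEquiv (l l' : List F) : Prop := IsHyp F (l ++ negList F l')

/-- Nondegeneracy: all diagonal entries are nonzero. -/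
def Nondeg (l : List F) : Prop := ∀ x ∈ l, x ≠ 0

/-- Diagonalization of the Pfister form `⟪a₁,…,aₙ⟫ = ⟨1,-a₁⟩⊗⋯⊗⟨1,-aₙ⟩`. -/
def pfister : List F → List F
  | [] => [1]
  | a :: l => pfister l ++ (pfister l).map (fun x => -a * x)

/-- `l` is a diagonalization of an `n`-fold Pfister form. -/
def IsPfister (n : ℕ) (l : List F) : Prop :=
  ∃ a : Fin n → F, (∀ i, a i ≠ 0) ∧ l = pfister F (List.ofFn a)

/-- `l` is a diagonalization of a form similar to an `n`-fold Pfister form. -/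
def IsGP (n : ℕ) (l : List F) : Prop :=
  ∃ c : F, c ≠ 0 ∧ ∃ p : List F, IsPfister F n p ∧ l = p.map (fun x => c * x)

/-- The Witt class of `l` lies in `IⁿF`, i.e. it is a sum of classes of
forms similar to `n`-fold Pfister forms. -/
def InI (n : ℕ) (l : List F) : Prop :=
  ∃ L : List (List F), (∀ p ∈ L, IsGP F n p) ∧ WittEquiv F l L.flatten

/-- The (scaled) `n`-Pfister number of `l` (`⊤` if the Witt class of `l` is not in `IⁿF`). -/
noncomputable def GPnum (n : ℕ) (l : List F) : ℕ∞ :=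
  sInf {k : ℕ∞ | ∃ L : List (List F), (L.length : ℕ∞) = k ∧
    (∀ p ∈ L, IsGP F n p) ∧ WittEquiv F l L.flatten}

/-- The unscaled `n`-Pfister number: least number of genuine `n`-fold Pfister
forms with signs `±1` whose Witt classes sum to that of `l`. -/
noncomputable def Pnum (n : ℕ) (l : List F) : ℕ∞ :=
  sInf {k : ℕ∞ | ∃ L : List (List F), (L.length : ℕ∞) = k ∧
    (∀ p ∈ L, IsPfister F n p ∨ ∃ q : List F, IsPfister F n q ∧ p = negList F q) ∧
    WittEquiv F l L.flatten}

/-- `GP_n(F, d)`: the supremum of `n`-Pfister numbers of forms in `IⁿF` of dimension `≤ d`. -/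
noncomputable def GPsup (n : ℕ) (d : ℕ) : ℕ∞ :=
  ⨆ l ∈ {l : List F | Nondeg F l ∧ InI F n l ∧ l.length ≤ d}, GPnum F n l

/-- `a` is a nonzero value represented by the form `l`. -/
def Represents (l : List F) (a : F) : Prop := a ≠ 0 ∧ ∃ x, qf F l x = a

/-- The set of nonzero represented values. -/
def D (l : List F) : Set F := {a | Represents F l a}

def Anisotropic (l : List F) : Prop := (qf F l).Anisotropic

def SameSquareClass (a b : F) : Prop := ∃ c : F, c ≠ 0 ∧ a = b * c ^ 2

/-- A field is rigid if every anisotropic binary form represents at most two square classes. -/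
def Rigid : Prop := ∀ x y : F, x ≠ 0 → y ≠ 0 → Anisotropic F [x, y] →
  ∃ u v : F, ∀ a : F, Represents F [x, y] a →
    SameSquareClass F a u ∨ SameSquareClass F a v

/-- The level `s(F)`: the least `n` such that `-1` is a sum of `n` squares (`⊤` if none). -/
noncomputable def level : ℕ∞ :=
  sInf {m : ℕ∞ | ∃ n : ℕ, m = (n : ℕ∞) ∧ ∃ f : Fin n → F, (-1 : F) = ∑ i, f i ^ 2}

/-- `l` is (isometric to) a subform of `l'`. -/
def Subform (l l' : List F) : Prop := ∃ r : List F, Isom F l' (l ++ r)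

end PN

/-!
Over a rigid field of level `≠ 2`, a nonzero value `a` of an anisotropic form `φ₁ ⊥ φ₂` is already
a value of `φ₁` or of `φ₂`. Write `a = a₁ + a₂` with `aᵢ` a value of `φᵢ`: the anisotropic binary
form `⟨a₁, a₂⟩` represents `a₁`, `a₂` and `a`, so by rigidity `a` lies in the square class of `a₁`
or of `a₂` unless `a₂ = a₁ e²`. In that case `-1` is not a square, and `1 + e²` is a square:
otherwise `⟨1 + e², -1⟩` would be anisotropic and represent `1 + e²`, `-1` and `1 = (1 + e²) - e²`,
three distinct square classes because `s(F) ≠ 2`. So `a = a₁ (1 + e²)` is in the class of `a₁`.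

The theorem follows by induction on `ψ = ⟨a⟩ ⊥ ψ'`: split `⟨a⟩` off the `φᵢ` that represents `a`
and remove it from both sides by Witt cancellation.
-/

open QuadraticMap

namespace QuadraticMap

section CommSemiring

variable {R M₁ M₂ N : Type*} [CommSemiring R] [AddCommMonoid M₁] [Module R M₁]
  [AddCommMonoid M₂] [Module R M₂] [AddCommMonoid N] [Module R N]

theorem Equivalent.anisotropic {Q₁ : QuadraticMap R M₁ N} {Q₂ : QuadraticMap R M₂ N}
    (h : Q₁.Equivalent Q₂) (h₁ : Q₁.Anisotropic) : Q₂.Anisotropic := by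
  obtain ⟨f⟩ := h
  intro y hy
  simpa using congrArg f (h₁ _ (by rwa [f.symm.map_app]) : f.symm y = 0)

end CommSemiring

section CommRing

variable {R M₀ M₁ M₂ N : Type*} [CommRing R] [AddCommGroup M₀] [Module R M₀]
  [AddCommGroup M₁] [Module R M₁] [AddCommGroup M₂] [Module R M₂] [AddCommGroup N] [Module R N]

theorem IsometryEquiv.map_polar {Q₁ : QuadraticMap R M₁ N} {Q₂ : QuadraticMap R M₂ N}
    (f : Q₁.IsometryEquiv Q₂) (x y : M₁) : polar Q₂ (f x) (f y) = polar Q₁ x y := by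
  simp only [polar, ← map_add, f.map_app]

theorem IsometryEquiv.equivalent_of_fst_eq_zero {Q₀ : QuadraticMap R M₀ N}
    {Q₁ : QuadraticMap R M₁ N} {Q₂ : QuadraticMap R M₂ N}
    (k : (Q₀.prod Q₁).IsometryEquiv (Q₀.prod Q₂)) (hk : ∀ y, (k (0, y)).1 = 0)
    (hk' : ∀ z, (k.symm (0, z)).1 = 0) : Q₁.Equivalent Q₂ := by
  let fwd : M₁ →ₗ[R] M₂ :=
    LinearMap.snd R M₀ M₂ ∘ₗ k.toLinearEquiv.toLinearMap ∘ₗ LinearMap.inr R M₀ M₁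
  let bwd : M₂ →ₗ[R] M₁ :=
    LinearMap.snd R M₀ M₁ ∘ₗ k.symm.toLinearEquiv.toLinearMap ∘ₗ LinearMap.inr R M₀ M₂
  have hfwd (y : M₁) : k (0, y) = (0, fwd y) := Prod.ext (hk y) rfl
  have hbwd (z : M₂) : k.symm (0, z) = (0, bwd z) := Prod.ext (hk' z) rfl
  refine ⟨⟨LinearEquiv.ofLinearMap fwd bwd (LinearMap.ext fun z => ?_)
    (LinearMap.ext fun y => ?_), fun y => ?_⟩⟩
  · have := k.apply_symm_apply (0, z)
    rw [hbwd, hfwd] at this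
    exact congrArg Prod.snd this
  · have := k.symm_apply_apply (0, y)
    rw [hfwd, hbwd] at this
    exact congrArg Prod.snd this
  · have := k.map_app (0, y)
    rw [hfwd] at this
    simpa using this

end CommRing

end QuadraticMap

namespace QuadraticForm

section WeightedSumSquares

variable {R ι κ : Type*} [CommSemiring R] [Fintype ι] [Fintype κ]

def weightedSumSquaresReindex (e : ι ≃ κ) {w : ι → R} {w' : κ → R} (h : ∀ i, w' (e i) = w i) :
    (weightedSumSquares R w).IsometryEquiv (weightedSumSquares R w') where
  toLinearEquiv := LinearEquiv.funCongrLeft R R e.symm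
  map_app' x := by
    simp only [weightedSumSquares_apply]
    exact Fintype.sum_equiv e.symm _ _ fun k => by simp [← h]

def weightedSumSquaresSumElim (w₁ : ι → R) (w₂ : κ → R) :
    (weightedSumSquares R (Sum.elim w₁ w₂)).IsometryEquiv
      ((weightedSumSquares R w₁).prod (weightedSumSquares R w₂)) where
  toLinearEquiv := LinearEquiv.sumArrowLequivProdArrow ι κ R R
  map_app' x := by
    simp [weightedSumSquares_apply, Fintype.sum_sum_type]

end WeightedSumSquares

section Field

variable {F V V₁ V₂ : Type*} [Field F] [AddCommGroup V] [Module F V]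
  [AddCommGroup V₁] [Module F V₁] [AddCommGroup V₂] [Module F V₂]

theorem polar_smul_sq (a s t : F) :
    polar (a • (QuadraticMap.sq : QuadraticMap F F F)) s t = 2 * a * (s * t) := by
  simp only [polar, smul_apply, sq_apply, smul_eq_mul]
  ring

def reflection (Q : QuadraticForm F V) {w : V} (hw : Q w ≠ 0) : Q.IsometryEquiv Q where
  toLinearEquiv := Module.reflection (x := w) (f := (Q w)⁻¹ • polarBilin Q w)
    (by rw [LinearMap.smul_apply, polarBilin_apply_apply, polar_self, smul_eq_mul, nsmul_eq_mul,
      Nat.cast_ofNat, mul_left_comm, inv_mul_cancel₀ hw, mul_one])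
  map_app' x := by
    change Q (x - ((Q w)⁻¹ * polar Q w x) • w) = Q x
    rw [sub_eq_add_neg, ← neg_smul, QuadraticMap.map_add Q, QuadraticMap.map_smul,
      polar_smul_right, polar_comm Q w x, smul_eq_mul, smul_eq_mul]
    field_simp
    ring

theorem reflection_apply (Q : QuadraticForm F V) {w : V} (hw : Q w ≠ 0) (x : V) :
    reflection Q hw x = x - ((Q w)⁻¹ * polar Q w x) • w :=
  rfl

theorem reflection_apply_of_polar_eq (Q : QuadraticForm F V) {w : V} (hw : Q w ≠ 0) {x : V}
    (h : polar Q w x = Q w) : reflection Q hw x = x - w := by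
  rw [reflection_apply, h, inv_mul_cancel₀ hw, one_smul]

theorem reflection_apply_self (Q : QuadraticForm F V) {w : V} (hw : Q w ≠ 0) :
    reflection Q hw w = -w := by
  rw [reflection_apply, polar_self, nsmul_eq_mul, Nat.cast_ofNat, mul_left_comm,
    inv_mul_cancel₀ hw, mul_one, two_smul, sub_add_cancel_left]

theorem exists_isometryEquiv_apply_eq (h2 : (2 : F) ≠ 0) (Q : QuadraticForm F V) {u v : V}
    (huv : Q u = Q v) (hv : Q v ≠ 0) : ∃ g : Q.IsometryEquiv Q, g u = v := by
  have hplus : Q (u + v) = 2 * Q u + polar Q u v := by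
    rw [QuadraticMap.map_add Q, huv]; ring
  have hminus : Q (u - v) = 2 * Q u - polar Q u v := by
    rw [sub_eq_add_neg, QuadraticMap.map_add Q, QuadraticMap.map_neg, polar_neg_right, huv]; ring
  have hpolar_self : polar Q u u = 2 * Q u := by rw [polar_self, nsmul_eq_mul, Nat.cast_ofNat]
  by_cases hm : Q (u - v) = 0
  · -- reflecting in `u + v` sends `u` to `-v`, and reflecting in `v` sends `-v` to `v`
    have hp : Q (u + v) ≠ 0 := by
      intro h
      have h4 : (2 * 2) * Q u = 0 := by
        linear_combination hplus.symm.trans h + hminus.symm.trans hm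
      exact hv (huv ▸ (mul_eq_zero.mp h4).resolve_left (mul_ne_zero h2 h2))
    refine ⟨(reflection Q hp).trans (reflection Q hv), ?_⟩
    change reflection Q hv (reflection Q hp u) = v
    rw [reflection_apply_of_polar_eq Q hp (by rw [polar_add_left, hpolar_self, hplus, polar_comm]),
      sub_add_cancel_left, map_neg, reflection_apply_self, neg_neg]
  · refine ⟨reflection Q hm, ?_⟩
    rw [reflection_apply_of_polar_eq Q hm (by rw [polar_sub_left, hpolar_self, hminus, polar_comm]),
      sub_sub_cancel]

theorem fst_apply_zero_eq_zero (h2 : (2 : F) ≠ 0) {a : F} (ha : a ≠ 0)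
    {Q₁ : QuadraticForm F V₁} {Q₂ : QuadraticForm F V₂}
    (k : ((a • QuadraticMap.sq).prod Q₁).IsometryEquiv ((a • QuadraticMap.sq).prod Q₂))
    (hk : k (1, 0) = (1, 0)) (y : V₁) : (k (0, y)).1 = 0 := by
  have h := k.map_polar (0, y) (1, 0)
  simp only [hk, polar_prod, polar_smul_sq, polar_zero_left, polar_zero_right] at h
  simpa [h2, ha] using h

/-- Witt cancellation of a line: after composing with an isometry that moves `f (1, 0)` back to
`(1, 0)`, the orthogonal complement `0 × V₁` is carried onto `0 × V₂`. -/
theorem _root_.QuadraticMap.Equivalent.of_smul_sq_prod (h2 : (2 : F) ≠ 0) {a : F} (ha : a ≠ 0)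
    {Q₁ : QuadraticForm F V₁} {Q₂ : QuadraticForm F V₂}
    (h : ((a • QuadraticMap.sq).prod Q₁).Equivalent ((a • QuadraticMap.sq).prod Q₂)) :
    Q₁.Equivalent Q₂ := by
  obtain ⟨f⟩ := h
  obtain ⟨g, hg⟩ := exists_isometryEquiv_apply_eq h2 ((a • QuadraticMap.sq).prod Q₂)
    (u := f (1, 0)) (v := (1, 0)) (by rw [f.map_app]; simp) (by simpa using ha)
  let k := f.trans g
  have hk : k (1, 0) = (1, 0) := hg
  have hk' : k.symm (1, 0) = (1, 0) := by rw [← hk, k.symm_apply_apply]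
  exact k.equivalent_of_fst_eq_zero (fst_apply_zero_eq_zero h2 ha k hk)
    (fst_apply_zero_eq_zero h2 ha k.symm hk')

theorem equivalent_smul_sq_prod_orthogonal (h2 : (2 : F) ≠ 0) (Q : QuadraticForm F V) {x : V}
    (hx : Q x ≠ 0) :
    ((Q x • QuadraticMap.sq).prod
      (Q.comp ((F ∙ x).orthogonalBilin (polarBilin Q)).subtype)).Equivalent Q := by
  have hx0 : x ≠ 0 := fun h => hx (by rw [h, map_zero])
  have hxx : polarBilin Q x x ≠ 0 := by
    rw [polarBilin_apply_apply, polar_self, nsmul_eq_mul, Nat.cast_ofNat]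
    exact mul_ne_zero h2 hx
  let W := (F ∙ x).orthogonalBilin (polarBilin Q)
  let e : (F × W) ≃ₗ[F] V :=
    ((LinearEquiv.toSpanNonzeroSingleton F V x hx0).prodCongr (LinearEquiv.refl F W)).trans
      (Submodule.prodEquivOfIsCompl _ _
        (LinearMap.BilinForm.isCompl_span_singleton_orthogonal hxx))
  refine ⟨⟨e, fun p => ?_⟩⟩
  change Q (p.1 • x + p.2) = Q x * (p.1 * p.1) + Q p.2
  have hortho : polar Q x p.2 = 0 := p.2.2 x (Submodule.mem_span_singleton_self x)
  rw [QuadraticMap.map_add Q, polar_smul_left, hortho, QuadraticMap.map_smul, smul_zero,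
    add_zero, smul_eq_mul, mul_comm]

theorem exists_equivalent_smul_sq_prod_weightedSumSquares [FiniteDimensional F V]
    (h2 : (2 : F) ≠ 0) (Q : QuadraticForm F V) {x : V} (hx : Q x ≠ 0) :
    ∃ (n : ℕ) (w : Fin n → F),
      ((Q x • QuadraticMap.sq).prod (weightedSumSquares F w)).Equivalent Q := by
  have := invertibleOfNonzero h2
  obtain ⟨w, hw⟩ := equivalent_weightedSumSquares
    (Q.comp ((F ∙ x).orthogonalBilin (polarBilin Q)).subtype)
  exact ⟨_, w,
    ((Equivalent.refl _).prod hw.symm).trans (equivalent_smul_sq_prod_orthogonal h2 Q hx)⟩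

end Field

end QuadraticForm

namespace PN

open QuadraticForm

variable {F : Type*} [Field F]

noncomputable def qfAppend (l₁ l₂ : List F) :
    (qf F (l₁ ++ l₂)).IsometryEquiv ((qf F l₁).prod (qf F l₂)) :=
  (weightedSumSquaresReindex (finSumFinEquiv.trans (finCongr List.length_append.symm))
    (w := Sum.elim l₁.get l₂.get) (w' := (l₁ ++ l₂).get)
    (by rintro (i | i) <;> simp [List.getElem_append_right])).symm.trans
    (weightedSumSquaresSumElim l₁.get l₂.get)

noncomputable def qfSingleton (a : F) : (qf F [a]).IsometryEquiv (a • QuadraticMap.sq) where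
  toLinearEquiv := LinearEquiv.funUnique (Fin 1) F F
  map_app' x := by simp [qf, weightedSumSquares_apply]

noncomputable def qfCons (a : F) (l : List F) :
    (qf F (a :: l)).IsometryEquiv ((a • QuadraticMap.sq).prod (qf F l)) :=
  (qfAppend [a] l).trans ((qfSingleton a).prod (QuadraticMap.IsometryEquiv.refl _))

theorem qf_ofFn_equivalent {n : ℕ} (w : Fin n → F) :
    (qf F (List.ofFn w)).Equivalent (weightedSumSquares F w) :=
  ⟨weightedSumSquaresReindex (finCongr List.length_ofFn) (fun i => by simp; rfl)⟩

theorem Isom.refl (l : List F) : Isom F l l := Equivalent.refl _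

theorem Isom.symm {l l' : List F} (h : Isom F l l') : Isom F l' l := Equivalent.symm h

theorem Isom.trans {l₁ l₂ l₃ : List F} (h : Isom F l₁ l₂) (h' : Isom F l₂ l₃) : Isom F l₁ l₃ :=
  Equivalent.trans h h'

theorem Isom.append {l₁ l₁' l₂ l₂' : List F} (h₁ : Isom F l₁ l₁') (h₂ : Isom F l₂ l₂') :
    Isom F (l₁ ++ l₂) (l₁' ++ l₂') :=
  Equivalent.trans ⟨qfAppend l₁ l₂⟩ ((Equivalent.prod h₁ h₂).trans ⟨(qfAppend l₁' l₂').symm⟩)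

theorem isom_append_comm (l₁ l₂ : List F) : Isom F (l₁ ++ l₂) (l₂ ++ l₁) :=
  ⟨(qfAppend l₁ l₂).trans ((IsometryEquiv.prodComm _ _).trans (qfAppend l₂ l₁).symm)⟩

theorem Isom.cons (a : F) {l l' : List F} (h : Isom F l l') : Isom F (a :: l) (a :: l') :=
  (Isom.refl [a]).append h

theorem Isom.of_cons (h2 : (2 : F) ≠ 0) {a : F} (ha : a ≠ 0) {l l' : List F}
    (h : Isom F (a :: l) (a :: l')) : Isom F l l' :=
  (Equivalent.trans ⟨(qfCons a l).symm⟩ (Equivalent.trans h ⟨qfCons a l'⟩)).of_smul_sq_prod h2 ha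

theorem Anisotropic.of_isom {l l' : List F} (h : Isom F l l') (hl : Anisotropic F l) :
    Anisotropic F l' :=
  Equivalent.anisotropic h hl

theorem Anisotropic.append_left {l₁ l₂ : List F} (h : Anisotropic F (l₁ ++ l₂)) :
    Anisotropic F l₁ :=
  (anisotropic_of_prod (Equivalent.anisotropic ⟨qfAppend l₁ l₂⟩ h)).1

theorem Anisotropic.tail {a : F} {l : List F} (h : Anisotropic F (a :: l)) : Anisotropic F l :=
  (anisotropic_of_prod (Equivalent.anisotropic ⟨qfCons a l⟩ h)).2

theorem Anisotropic.head_ne_zero {a : F} {l : List F} (h : Anisotropic F (a :: l)) : a ≠ 0 :=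
  fun ha => one_ne_zero <| (anisotropic_of_prod (Equivalent.anisotropic ⟨qfCons a l⟩ h)).1 1
    (by simp [ha])

theorem Represents.of_isom {l l' : List F} {a : F} (h : Isom F l l') (hl : Represents F l a) :
    Represents F l' a := by
  obtain ⟨f⟩ := h
  obtain ⟨ha, x, rfl⟩ := hl
  exact ⟨ha, f x, f.map_app x⟩

theorem represents_cons {a : F} (ha : a ≠ 0) (l : List F) : Represents F (a :: l) a :=
  ⟨ha, (qfCons a l).symm (1, 0), by simp [IsometryEquiv.map_app]⟩

theorem exists_isom_cons_of_represents (h2 : (2 : F) ≠ 0) {l : List F} {a : F}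
    (h : Represents F l a) : ∃ l', Isom F l (a :: l') := by
  obtain ⟨ha, x, rfl⟩ := h
  obtain ⟨n, w, hw⟩ := exists_equivalent_smul_sq_prod_weightedSumSquares h2 (qf F l) ha
  exact ⟨List.ofFn w, Equivalent.symm <| Equivalent.trans ⟨qfCons _ _⟩
    (((Equivalent.refl _).prod (qf_ofFn_equivalent w)).trans hw)⟩

theorem Subform.nil (φ : List F) : Subform F [] φ := ⟨φ, Isom.refl φ⟩

theorem Subform.trans_isom {ψ φ φ' : List F} (h : Subform F ψ φ) (e : Isom F φ φ') :
    Subform F ψ φ' :=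
  let ⟨r, hr⟩ := h; ⟨r, e.symm.trans hr⟩

theorem Subform.cons (a : F) {ψ φ : List F} (h : Subform F ψ φ) : Subform F (a :: ψ) (a :: φ) :=
  let ⟨r, hr⟩ := h; ⟨r, hr.cons a⟩

theorem Subform.of_cons (h2 : (2 : F) ≠ 0) {a : F} (ha : a ≠ 0) {ψ φ : List F}
    (h : Subform F (a :: ψ) (a :: φ)) : Subform F ψ φ :=
  let ⟨r, hr⟩ := h; ⟨r, hr.of_cons h2 ha⟩

theorem Subform.represents {a : F} {ψ φ : List F} (h : Subform F (a :: ψ) φ) (ha : a ≠ 0) :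
    Represents F φ a :=
  let ⟨_, hr⟩ := h; (represents_cons ha _).of_isom hr.symm

theorem Anisotropic.of_subform {ψ φ : List F} (hφ : Anisotropic F φ) (h : Subform F ψ φ) :
    Anisotropic F ψ :=
  let ⟨_, hr⟩ := h; (hφ.of_isom hr).append_left

theorem SameSquareClass.symm {a b : F} (h : SameSquareClass F a b) : SameSquareClass F b a := by
  obtain ⟨c, hc, rfl⟩ := h
  exact ⟨c⁻¹, inv_ne_zero hc, by field_simp⟩

theorem SameSquareClass.trans {a b c : F} (h : SameSquareClass F a b)
    (h' : SameSquareClass F b c) : SameSquareClass F a c := by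
  obtain ⟨d, hd, rfl⟩ := h
  obtain ⟨e, he, rfl⟩ := h'
  exact ⟨e * d, mul_ne_zero he hd, by ring⟩

theorem Represents.of_sameSquareClass {l : List F} {a b : F} (hb : Represents F l b)
    (h : SameSquareClass F a b) : Represents F l a := by
  obtain ⟨c, hc, rfl⟩ := h
  obtain ⟨hb, x, rfl⟩ := hb
  exact ⟨mul_ne_zero hb (pow_ne_zero 2 hc), c • x, by rw [QuadraticMap.map_smul, smul_eq_mul]; ring⟩

theorem qf_pair (x y : F) (v : Fin 2 → F) : qf F [x, y] v = x * v 0 ^ 2 + y * v 1 ^ 2 := by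
  simp [qf, weightedSumSquares_apply, Fin.sum_univ_two, _root_.sq]

theorem represents_pair {x y a s t : F} (h : x * s ^ 2 + y * t ^ 2 = a) (ha : a ≠ 0) :
    Represents F [x, y] a :=
  ⟨ha, ![s, t], by rw [qf_pair]; simpa using h⟩

theorem anisotropic_pair {x y : F} (h : ∀ s t : F, x * s ^ 2 + y * t ^ 2 = 0 → s = 0 ∧ t = 0) :
    Anisotropic F [x, y] := by
  intro v hv
  obtain ⟨h0, h1⟩ := h _ _ ((qf_pair x y v).symm.trans hv)
  funext i
  fin_cases i
  exacts [h0, h1]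

theorem level_eq_two {p q : F} (hsq : ¬IsSquare (-1 : F)) (h : -1 = p ^ 2 + q ^ 2) :
    level F = 2 := by
  refine le_antisymm (sInf_le ⟨2, rfl, ![p, q], by simpa [Fin.sum_univ_two] using h⟩) ?_
  refine le_sInf ?_
  rintro m ⟨n, rfl, f, hf⟩
  match n with
  | 0 => simp at hf
  | 1 => exact (hsq ⟨f 0, by simpa [_root_.sq] using hf⟩).elim
  | k + 2 => exact_mod_cast Nat.le_add_left 2 k

theorem Rigid.sameSquareClass_of_represents (hF : Rigid F) {x y : F} (hx : x ≠ 0) (hy : y ≠ 0)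
    (hxy : Anisotropic F [x, y]) {a b c : F} (ha : Represents F [x, y] a)
    (hb : Represents F [x, y] b) (hc : Represents F [x, y] c) (hab : ¬SameSquareClass F a b)
    (hac : ¬SameSquareClass F a c) : SameSquareClass F b c := by
  obtain ⟨u, v, huv⟩ := hF x y hx hy hxy
  rcases huv a ha with h₁ | h₁ <;> rcases huv b hb with h₂ | h₂ <;>
    rcases huv c hc with h₃ | h₃ <;>
    first
      | exact h₂.trans h₃.symm
      | exact absurd (h₁.trans h₂.symm) hab
      | exact absurd (h₁.trans h₃.symm) hac

theorem Rigid.isSquare_one_add_sq (hF : Rigid F) (hlevel : level F ≠ 2)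
    (hsq : ¬IsSquare (-1 : F)) (e : F) : IsSquare (1 + e ^ 2) := by
  by_contra hc
  have hc0 : 1 + e ^ 2 ≠ 0 := fun h => hsq ⟨e, by linear_combination -h⟩
  have hm1 : (-1 : F) ≠ 0 := neg_ne_zero.mpr one_ne_zero
  have hani : Anisotropic F [1 + e ^ 2, -1] := anisotropic_pair fun s t hst => by
    by_cases hs : s = 0
    · subst hs
      exact ⟨rfl, pow_eq_zero_iff two_ne_zero |>.mp (by linear_combination -hst)⟩
    · exact (hc ⟨t / s, by field_simp; linear_combination hst⟩).elim
  obtain ⟨r, -, hr⟩ := hF.sameSquareClass_of_represents hc0 hm1 hani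
    (represents_pair (s := 1) (t := 0) (by ring) hc0)
    (represents_pair (s := 0) (t := 1) (by ring) hm1)
    (represents_pair (s := 1) (t := e) (by ring) one_ne_zero)
    (fun ⟨r, hr0, hr⟩ => hlevel (level_eq_two hsq (p := r⁻¹) (q := e * r⁻¹)
      (by field_simp; linear_combination -hr)))
    (fun ⟨r, _, hr⟩ => hc ⟨r, by rw [hr]; ring⟩)
  exact hsq ⟨r, by rw [hr]; ring⟩

theorem Rigid.sameSquareClass_add (hF : Rigid F) (hlevel : level F ≠ 2) {a₁ a₂ : F}
    (h₁ : a₁ ≠ 0) (h₂ : a₂ ≠ 0) (hani : ∀ s t : F, a₁ * s ^ 2 + a₂ * t ^ 2 = 0 → s = 0 ∧ t = 0) :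
    SameSquareClass F (a₁ + a₂) a₁ ∨ SameSquareClass F (a₁ + a₂) a₂ := by
  have ha : a₁ + a₂ ≠ 0 := fun h => one_ne_zero (hani 1 1 (by linear_combination h)).1
  by_contra! hnot
  obtain ⟨e, -, he⟩ := hF.sameSquareClass_of_represents h₁ h₂ (anisotropic_pair hani)
    (represents_pair (s := 1) (t := 1) (by ring) ha)
    (represents_pair (s := 1) (t := 0) (by ring) h₁)
    (represents_pair (s := 0) (t := 1) (by ring) h₂) hnot.1 hnot.2
  have hsq : ¬IsSquare (-1 : F) := fun ⟨r, hr⟩ =>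
    one_ne_zero (hani 1 (r * e) (by linear_combination he - a₂ * e ^ 2 * hr)).1
  obtain ⟨f, hf⟩ := hF.isSquare_one_add_sq hlevel hsq e
  have hsum : a₁ + a₂ = a₂ * f ^ 2 := by linear_combination he + a₂ * hf
  exact hnot.2 ⟨f, fun h => ha (by rw [hsum, h]; ring), hsum⟩

theorem Rigid.represents_or_of_anisotropic_append (hF : Rigid F) (hlevel : level F ≠ 2)
    {φ₁ φ₂ : List F} (han : Anisotropic F (φ₁ ++ φ₂)) {a : F}
    (ha : Represents F (φ₁ ++ φ₂) a) : Represents F φ₁ a ∨ Represents F φ₂ a := by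
  obtain ⟨ha0, v, rfl⟩ := ha
  rw [← (qfAppend φ₁ φ₂).map_app v, QuadraticMap.prod_apply] at ha0 ⊢
  generalize qfAppend φ₁ φ₂ v = p at ha0 ⊢
  obtain ⟨x, y⟩ := p
  have hprod := Equivalent.anisotropic ⟨qfAppend φ₁ φ₂⟩ han
  by_cases hx : qf F φ₁ x = 0
  · exact .inr ⟨by simpa [hx] using ha0, y, by simp [hx]⟩
  by_cases hy : qf F φ₂ y = 0
  · exact .inl ⟨by simpa [hy] using ha0, x, by simp [hy]⟩
  have hani (s t : F) (hst : qf F φ₁ x * s ^ 2 + qf F φ₂ y * t ^ 2 = 0) : s = 0 ∧ t = 0 := by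
    have h0 := hprod (s • x, t • y) (by
      simp only [QuadraticMap.prod_apply, QuadraticMap.map_smul, smul_eq_mul]
      linear_combination hst)
    simp only [Prod.mk_eq_zero, smul_eq_zero] at h0
    exact ⟨h0.1.resolve_right (by rintro rfl; simp at hx),
      h0.2.resolve_right (by rintro rfl; simp at hy)⟩
  rcases hF.sameSquareClass_add hlevel hx hy hani with h | h
  · exact .inl (Represents.of_sameSquareClass ⟨hx, x, rfl⟩ h)
  · exact .inr (Represents.of_sameSquareClass ⟨hy, y, rfl⟩ h)

end PN

theorem stmt_14_general (F : Type*) [Field F] (hF : (2 : F) ≠ 0)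
    (hrigid : PN.Rigid F) (hlevel : PN.level F ≠ 2)
    (φ₁ φ₂ : List F)
    (han : PN.Anisotropic F (φ₁ ++ φ₂))
    (ψ : List F) (hψ : PN.Subform F ψ (φ₁ ++ φ₂)) :
    ∃ ψ₁ ψ₂ : List F, PN.Subform F ψ₁ φ₁ ∧ PN.Subform F ψ₂ φ₂ ∧
      PN.Isom F ψ (ψ₁ ++ ψ₂) := by
  induction ψ generalizing φ₁ φ₂ with
  | nil => exact ⟨[], [], .nil φ₁, .nil φ₂, .refl []⟩
  | cons a ψ ih =>
    have ha : a ≠ 0 := (han.of_subform hψ).head_ne_zero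
    wlog h₁ : PN.Represents F φ₁ a generalizing φ₁ φ₂
    · have hswap := PN.isom_append_comm φ₁ φ₂
      obtain ⟨ψ₂, ψ₁, hψ₂, hψ₁, hiso⟩ := this φ₂ φ₁ (han.of_isom hswap) (hψ.trans_isom hswap)
        ((hrigid.represents_or_of_anisotropic_append hlevel han (hψ.represents ha)).resolve_left h₁)
      exact ⟨ψ₁, ψ₂, hψ₁, hψ₂, hiso.trans (PN.isom_append_comm ψ₂ ψ₁)⟩
    obtain ⟨φ₁', hφ₁⟩ := PN.exists_isom_cons_of_represents hF h₁
    have hsplit : PN.Isom F (φ₁ ++ φ₂) (a :: (φ₁' ++ φ₂)) := hφ₁.append (.refl φ₂)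
    obtain ⟨ψ₁, ψ₂, hψ₁, hψ₂, hiso⟩ :=
      ih φ₁' φ₂ (han.of_isom hsplit).tail ((hψ.trans_isom hsplit).of_cons hF ha)
    exact ⟨a :: ψ₁, ψ₂, (hψ₁.cons a).trans_isom hφ₁.symm, hψ₂, hiso.cons a⟩

theorem stmt_14 (F : Type*) [Field F] (hF : (2 : F) ≠ 0)
    (hrigid : PN.Rigid F) (hlevel : PN.level F ≠ 2)
    (φ₁ φ₂ : List F) (hn₁ : PN.Nondeg F φ₁) (hn₂ : PN.Nondeg F φ₂)
    (han : PN.Anisotropic F (φ₁ ++ φ₂))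
    (ψ : List F) (hψ : PN.Subform F ψ (φ₁ ++ φ₂)) :
    ∃ ψ₁ ψ₂ : List F, PN.Subform F ψ₁ φ₁ ∧ PN.Subform F ψ₂ φ₂ ∧
      PN.Isom F ψ (ψ₁ ++ ψ₂) :=
  stmt_14_general F hF hrigid hlevel φ₁ φ₂ han ψ hψ
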